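/- arXiv:2508.06431 — 4 statements merged into one kernel-verified Lean document; each statement's English description precedes it below -/
import Mathlib

section
/- For every t ∈ ℝ, the mean squared error of the kernel characteristic function estimator decomposes as squared bias plus variance: E[|φ̂_{nh}(t) − φ(t)|²] = |φ_K(th) − 1|²·|φ(t)|² + |φ_K(th)|²·(1 − |φ(t)|²)/n. -/
open MeasureTheory ProbabilityTheory Finset

/-- The empirical characteristic function `φ̂_n(t) = (1/n)·Σ_j exp(i t X_j)`. -/
noncomputable def empCharFun {Ω : Type*} {n : ℕ} (X : Fin n → Ω → ℝ) (t : ℝ) (ω : Ω) : ℂ :=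
  (1 / (n : ℂ)) * ∑ j : Fin n, Complex.exp (Complex.I * (t : ℂ) * (X j ω : ℂ))

/-- The characteristic function `φ(t) = E[exp(i t Y)]` of a real random variable `Y`. -/
noncomputable def charFunRV {Ω : Type*} [MeasureSpace Ω] (Y : Ω → ℝ) (t : ℝ) : ℂ :=
  ∫ ω, Complex.exp (Complex.I * (t : ℂ) * (Y ω : ℂ)) ∂ℙ

/-- The characteristic function `φ_K(s) = ∫ K(z)·exp(i s z) dz` of a kernel `K`. -/
noncomputable def kernelCF (K : ℝ → ℝ) (s : ℝ) : ℂ :=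
  ∫ z : ℝ, ((K z : ℝ) : ℂ) * Complex.exp (Complex.I * (s : ℂ) * (z : ℂ))

/-! The estimator is `a • Z` with the constant `a = φ_K(th)` and `Z = φ̂_n(t)` the average of the
unimodular variables `exp(itX_j)`, each of mean `φ(t)`. Writing `a Z - φ = (a - 1) φ + a (Z - φ)`
and using `E[Z - φ] = 0` splits the error into squared bias and `|a|²·E|Z - φ|²`. Independent
centred summands are orthogonal in `L²`, so `E|Z - φ|²` is `1/n` times the variance of one summand,
which is `E|exp(itX)|² - |φ(t)|² = 1 - |φ(t)|²`. -/

section MeanSquare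

variable {Ω : Type*} {mΩ : MeasurableSpace Ω} {μ : Measure Ω}

lemma MeasureTheory.MemLp.integrable_inner {E : Type*} [NormedAddCommGroup E]
    [InnerProductSpace ℝ E] {f g : Ω → E} (hf : MemLp f 2 μ) (hg : MemLp g 2 μ) :
    Integrable (fun ω ↦ inner ℝ (f ω) (g ω)) μ :=
  memLp_one_iff_integrable.1 <| (innerSL ℝ).memLp_of_bilin 1 hf hg

variable [IsProbabilityMeasure μ] {E : Type*} [NormedAddCommGroup E] [InnerProductSpace ℝ E]
  [CompleteSpace E]

lemma integral_norm_sub_sq_eq_norm_sub_sq_add {Z : Ω → E} (hZ : MemLp Z 2 μ) (c : E) :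
    ∫ ω, ‖Z ω - c‖ ^ 2 ∂μ = ‖μ[Z] - c‖ ^ 2 + ∫ ω, ‖Z ω - μ[Z]‖ ^ 2 ∂μ := by
  have hZc : MemLp (fun ω ↦ Z ω - μ[Z]) 2 μ := hZ.sub (memLp_const _)
  have hsplit : ∀ ω, ‖Z ω - c‖ ^ 2
      = ‖Z ω - μ[Z]‖ ^ 2 + 2 * inner ℝ (μ[Z] - c) (Z ω - μ[Z]) + ‖μ[Z] - c‖ ^ 2 := fun ω ↦ by
    rw [real_inner_comm, ← norm_add_sq_real, sub_add_sub_cancel]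
  have hcentered : ∫ ω, inner ℝ (μ[Z] - c) (Z ω - μ[Z]) ∂μ = 0 := by
    rw [integral_inner (hZc.integrable one_le_two), integral_sub (hZ.integrable one_le_two)
      (integrable_const _)]
    simp
  have hint_sq : Integrable (fun ω ↦ ‖Z ω - μ[Z]‖ ^ 2) μ := hZc.integrable_norm_pow'
  have hint_inner : Integrable (fun ω ↦ 2 * inner ℝ (μ[Z] - c) (Z ω - μ[Z])) μ :=
    ((memLp_const _).integrable_inner hZc).const_mul 2
  have hint_sum : Integrable (fun ω ↦ ‖Z ω - μ[Z]‖ ^ 2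
      + 2 * inner ℝ (μ[Z] - c) (Z ω - μ[Z])) μ := hint_sq.add hint_inner
  rw [integral_congr_ae (.of_forall hsplit), integral_add hint_sum (integrable_const _),
    integral_add hint_sq hint_inner, integral_const_mul, hcentered]
  simp [add_comm]

lemma integral_norm_mul_sub_sq {𝕜 : Type*} [RCLike 𝕜] {Z : Ω → 𝕜} (hZ : MemLp Z 2 μ) (a : 𝕜) :
    ∫ ω, ‖Z ω * a - μ[Z]‖ ^ 2 ∂μ
      = ‖a - 1‖ ^ 2 * ‖μ[Z]‖ ^ 2 + ‖a‖ ^ 2 * ∫ ω, ‖Z ω - μ[Z]‖ ^ 2 ∂μ := by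
  rw [integral_norm_sub_sq_eq_norm_sub_sq_add (hZ.mul_const a), integral_mul_const]
  simp_rw [← mul_sub_one, ← sub_mul, norm_mul, mul_pow, integral_mul_const]
  ring

variable [MeasurableSpace E] [BorelSpace E] {ι : Type*} [Fintype ι]

lemma integral_norm_sum_sq_of_indepFun {g : ι → Ω → E} (hg : ∀ i, MemLp (g i) 2 μ)
    (hindep : Pairwise fun i j ↦ IndepFun (g i) (g j) μ) (hmean : ∀ i, μ[g i] = 0) :
    ∫ ω, ‖∑ i, g i ω‖ ^ 2 ∂μ = ∑ i, ∫ ω, ‖g i ω‖ ^ 2 ∂μ := by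
  have horth : ∀ i j, i ≠ j → ∫ ω, inner ℝ (g i ω) (g j ω) ∂μ = 0 := fun i j hij ↦
    calc ∫ ω, inner ℝ (g i ω) (g j ω) ∂μ = ∫ ω, innerSL ℝ (g i ω) (g j ω) ∂μ := rfl
      _ = innerSL ℝ μ[g i] μ[g j] := (hindep hij).integral_bilin
          ((hg i).integrable one_le_two) ((hg j).integrable one_le_two) (innerSL ℝ)
      _ = 0 := by simp [hmean]
  have hexpand : ∀ ω, ‖∑ i, g i ω‖ ^ 2 = ∑ i, ∑ j, inner ℝ (g i ω) (g j ω) := fun ω ↦ by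
    simp_rw [← real_inner_self_eq_norm_sq, sum_inner, inner_sum]
  rw [integral_congr_ae (.of_forall hexpand), integral_finsetSum _ fun i _ ↦
    integrable_finsetSum _ fun j _ ↦ (hg i).integrable_inner (hg j)]
  refine sum_congr rfl fun i _ ↦ ?_
  rw [integral_finsetSum _ fun j _ ↦ (hg i).integrable_inner (hg j),
    sum_eq_single i (fun j _ hji ↦ horth i j hji.symm) (by simp)]
  simp_rw [real_inner_self_eq_norm_sq]

lemma integral_norm_average_sub_sq [Nonempty ι] {g : ι → Ω → E} {m : E} {v : ℝ}
    (hg : ∀ i, MemLp (g i) 2 μ) (hindep : Pairwise fun i j ↦ IndepFun (g i) (g j) μ)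
    (hmean : ∀ i, μ[g i] = m) (hvar : ∀ i, ∫ ω, ‖g i ω - m‖ ^ 2 ∂μ = v) :
    ∫ ω, ‖(Fintype.card ι : ℝ)⁻¹ • ∑ i, g i ω - m‖ ^ 2 ∂μ = v / Fintype.card ι := by
  have hcard : (Fintype.card ι : ℝ) ≠ 0 := by positivity
  have hcentered : ∀ ω, (Fintype.card ι : ℝ)⁻¹ • ∑ i, g i ω - m
      = (Fintype.card ι : ℝ)⁻¹ • ∑ i, (g i ω - m) := fun ω ↦ by
    rw [sum_sub_distrib, sum_const, card_univ, smul_sub, ← Nat.cast_smul_eq_nsmul ℝ, smul_smul,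
      inv_mul_cancel₀ hcard, one_smul]
  have hsum := integral_norm_sum_sq_of_indepFun (g := fun i ω ↦ g i ω - m)
    (fun i ↦ (hg i).sub (memLp_const m))
    (fun i j hij ↦ (hindep hij).comp (measurable_id.sub_const m) (measurable_id.sub_const m))
    (fun i ↦ by rw [integral_sub ((hg i).integrable one_le_two) (integrable_const m), hmean]; simp)
  simp_rw [hcentered, norm_smul, mul_pow, integral_const_mul, hsum, hvar, sum_const, card_univ,
    nsmul_eq_mul, norm_inv, Real.norm_natCast]
  field_simp

end MeanSquare

lemma norm_cexp_I_mul_ofReal_mul (t x : ℝ) : ‖Complex.exp (Complex.I * t * x)‖ = 1 := by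
  simp [Complex.norm_exp]

lemma empCharFun_eq_smul_sum {Ω : Type*} {n : ℕ} (X : Fin n → Ω → ℝ) (t : ℝ) : empCharFun X t
    = fun ω ↦ (Fintype.card (Fin n) : ℝ)⁻¹ • ∑ j, Complex.exp (Complex.I * t * X j ω) := by
  ext ω
  simp [empCharFun, Complex.real_smul]

section EmpiricalCharFun

variable {Ω : Type*} [MeasureSpace Ω]

lemma charFunRV_eq_of_identDistrib {Y Y' : Ω → ℝ} (h : IdentDistrib Y Y' ℙ ℙ) (t : ℝ) :
    charFunRV Y t = charFunRV Y' t :=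
  (h.comp (show Measurable fun x : ℝ ↦ Complex.exp (Complex.I * t * x) by fun_prop)).integral_eq

variable [IsProbabilityMeasure (ℙ : Measure Ω)]

lemma memLp_cexp_I_mul {Y : Ω → ℝ} (hY : Measurable Y) (t : ℝ) :
    MemLp (fun ω ↦ Complex.exp (Complex.I * t * Y ω)) 2 ℙ :=
  (memLp_top_of_bound (by fun_prop) 1
    (.of_forall fun ω ↦ (norm_cexp_I_mul_ofReal_mul t (Y ω)).le)).mono_exponent le_top

lemma integral_norm_cexp_I_mul_sub_charFunRV_sq {Y : Ω → ℝ} (hY : Measurable Y) (t : ℝ) :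
    ∫ ω, ‖Complex.exp (Complex.I * t * Y ω) - charFunRV Y t‖ ^ 2 = 1 - ‖charFunRV Y t‖ ^ 2 := by
  have h := integral_norm_sub_sq_eq_norm_sub_sq_add (memLp_cexp_I_mul hY t) 0
  simp only [sub_zero, norm_cexp_I_mul_ofReal_mul, one_pow, integral_const, probReal_univ,
    smul_eq_mul, mul_one] at h
  rw [charFunRV]
  linarith

variable {n : ℕ} {X : Fin n → Ω → ℝ}

lemma memLp_empCharFun (hmeas : ∀ j, Measurable (X j)) (t : ℝ) : MemLp (empCharFun X t) 2 ℙ := by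
  rw [empCharFun_eq_smul_sum]
  exact (memLp_finsetSum _ fun j _ ↦ memLp_cexp_I_mul (hmeas j) t).const_smul
    (Fintype.card (Fin n) : ℝ)⁻¹

lemma integral_empCharFun (hmeas : ∀ j, Measurable (X j)) (i : Fin n)
    (hident : ∀ j, IdentDistrib (X j) (X i) ℙ ℙ) (t : ℝ) :
    ℙ[empCharFun X t] = charFunRV (X i) t := by
  rw [empCharFun_eq_smul_sum, integral_smul,
    integral_finsetSum _ fun j _ ↦ (memLp_cexp_I_mul (hmeas j) t).integrable one_le_two]
  have hX : ∀ j, ∫ ω, Complex.exp (Complex.I * t * X j ω) = charFunRV (X i) t := fun j ↦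
    charFunRV_eq_of_identDistrib (hident j) t
  simp [hX, (Fin.pos i).ne']

lemma integral_norm_empCharFun_sub_sq (hmeas : ∀ j, Measurable (X j)) (hindep : iIndepFun X ℙ)
    (i : Fin n) (hident : ∀ j, IdentDistrib (X j) (X i) ℙ ℙ) (t : ℝ) :
    ∫ ω, ‖empCharFun X t ω - charFunRV (X i) t‖ ^ 2 = (1 - ‖charFunRV (X i) t‖ ^ 2) / n := by
  have : Nonempty (Fin n) := ⟨i⟩
  have hu : Measurable fun x : ℝ ↦ Complex.exp (Complex.I * t * x) := by fun_prop
  simpa [empCharFun_eq_smul_sum] using integral_norm_average_sub_sq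
    (fun j ↦ memLp_cexp_I_mul (hmeas j) t) (fun j k hjk ↦ (hindep.indepFun hjk).comp hu hu)
    (fun j ↦ charFunRV_eq_of_identDistrib (hident j) t)
    (fun j ↦ by rw [← charFunRV_eq_of_identDistrib (hident j) t,
      integral_norm_cexp_I_mul_sub_charFunRV_sq (hmeas j)])

end EmpiricalCharFun

theorem kcfe_mse_decomposition_general
    {Ω : Type*} [MeasureSpace Ω] [IsProbabilityMeasure (ℙ : Measure Ω)]
    (n : ℕ) (hn : 0 < n) (X : Fin n → Ω → ℝ)
    (hmeas : ∀ j, Measurable (X j))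
    (hindep : iIndepFun X ℙ)
    (hident : ∀ j, Measure.map (X j) ℙ = Measure.map (X ⟨0, hn⟩) ℙ)
    (K : ℝ → ℝ)
    (h : ℝ) (t : ℝ) :
    ∫ ω, ‖empCharFun X t ω * kernelCF K (t * h) - charFunRV (X ⟨0, hn⟩) t‖ ^ 2 ∂ℙ
      = ‖kernelCF K (t * h) - 1‖ ^ 2 * ‖charFunRV (X ⟨0, hn⟩) t‖ ^ 2
        + ‖kernelCF K (t * h)‖ ^ 2 * (1 - ‖charFunRV (X ⟨0, hn⟩) t‖ ^ 2) / n := by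
  have hident_distrib : ∀ j, IdentDistrib (X j) (X ⟨0, hn⟩) ℙ ℙ := fun j ↦
    ⟨(hmeas j).aemeasurable, (hmeas _).aemeasurable, hident j⟩
  have hmean := integral_empCharFun hmeas _ hident_distrib t
  have hvar := integral_norm_empCharFun_sub_sq hmeas hindep _ hident_distrib t
  have hmse := integral_norm_mul_sub_sq (memLp_empCharFun hmeas t) (kernelCF K (t * h))
  rw [hmean, hvar] at hmse
  rw [hmse, mul_div_assoc]

/-- For every `t : ℝ`, the mean squared error of the kernel characteristic
function estimator decomposes as squared bias plus variance:
`E[|φ̂_{nh}(t) − φ(t)|²] = |φ_K(th) − 1|²·|φ(t)|² + |φ_K(th)|²·(1 − |φ(t)|²)/n`. -/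
theorem kcfe_mse_decomposition
    {Ω : Type*} [MeasureSpace Ω] [IsProbabilityMeasure (ℙ : Measure Ω)]
    (n : ℕ) (hn : 0 < n) (X : Fin n → Ω → ℝ)
    (hmeas : ∀ j, Measurable (X j))
    (hindep : iIndepFun X ℙ)
    (hident : ∀ j, Measure.map (X j) ℙ = Measure.map (X ⟨0, hn⟩) ℙ)
    (K : ℝ → ℝ) (hKint : Integrable K) (hK0 : ∀ z, 0 ≤ K z) (hK1 : ∫ z, K z = 1)
    (h : ℝ) (hh : 0 < h) (t : ℝ) :
    ∫ ω, ‖empCharFun X t ω * kernelCF K (t * h) - charFunRV (X ⟨0, hn⟩) t‖ ^ 2 ∂ℙ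
      = ‖kernelCF K (t * h) - 1‖ ^ 2 * ‖charFunRV (X ⟨0, hn⟩) t‖ ^ 2
        + ‖kernelCF K (t * h)‖ ^ 2 * (1 - ‖charFunRV (X ⟨0, hn⟩) t‖ ^ 2) / n :=
  kcfe_mse_decomposition_general n hn X hmeas hindep hident K h t
end

section
/- For the KCFE built with the Gaussian kernel with parameter α > 0 and bandwidth h > 0, for every t ∈ ℝ, writing u = exp(−t²h²α²/4), the mean squared error satisfies E[|φ̂_{nh}(t) − φ(t)|²] = (u − 1)²·|φ(t)|² + u²·(1 − |φ(t)|²)/n. -/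
open MeasureTheory ProbabilityTheory Finset

/-- The Gaussian kernel with parameter `α`: `K(z) = (√π·α)⁻¹·exp(−z²/α²)`. -/
noncomputable def gaussKernel (α : ℝ) (z : ℝ) : ℝ :=
  (Real.sqrt Real.pi * α)⁻¹ * Real.exp (-(z ^ 2) / α ^ 2)

/-!
The Gaussian kernel is the `N(0, α²/2)` density, so `φ_K(th) = u` and the KCFE is `u` times the
sample mean of the unit-modulus variables `Y_j = exp(itX_j)`, whose mean is `φ(t)`. In `ℂ`, seen
as a real inner product space, the error of `c • (sample mean)` splits as the bias `(c - 1) φ`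
plus `c/n` times a sum of centred, pairwise independent and hence `L²`-orthogonal terms; so the
mean squared error is `‖(c - 1) φ‖² + c²/n · E‖Y - φ‖²`, and `E‖Y - φ‖² = 1 - ‖φ‖²`.
-/

open scoped RealInnerProductSpace

section SecondMoments

variable {Ω E : Type*} {mΩ : MeasurableSpace Ω} {μ : Measure Ω}
  [NormedAddCommGroup E] [InnerProductSpace ℝ E]

lemma MeasureTheory.MemLp.integrable_real_inner {f g : Ω → E} (hf : MemLp f 2 μ)
    (hg : MemLp g 2 μ) : Integrable (fun ω ↦ ⟪f ω, g ω⟫) μ := by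
  refine ((hf.integrable_norm_pow two_ne_zero).add (hg.integrable_norm_pow two_ne_zero)).mono'
    (hf.1.inner hg.1) (ae_of_all _ fun ω ↦ ?_)
  have hcs := abs_real_inner_le_norm (f ω) (g ω)
  simp only [Real.norm_eq_abs, Pi.add_apply]
  nlinarith [sq_nonneg (‖f ω‖ - ‖g ω‖)]

variable [CompleteSpace E]

lemma integral_norm_add_const_sq [IsProbabilityMeasure μ] {A : Ω → E} (hA : MemLp A 2 μ)
    (hA₀ : ∫ ω, A ω ∂μ = 0) (b : E) :
    ∫ ω, ‖A ω + b‖ ^ 2 ∂μ = ∫ ω, ‖A ω‖ ^ 2 ∂μ + ‖b‖ ^ 2 := by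
  have hsq : Integrable (fun ω ↦ ‖A ω‖ ^ 2) μ := hA.integrable_norm_pow two_ne_zero
  have hcross_int : Integrable (fun ω ↦ 2 * ⟪b, A ω⟫) μ :=
    ((hA.integrable one_le_two).const_inner b).const_mul 2
  have hcross : ∫ ω, ⟪b, A ω⟫ ∂μ = 0 := by
    rw [integral_inner (hA.integrable one_le_two), hA₀, inner_zero_right]
  simp_rw [norm_add_sq_real, real_inner_comm b]
  rw [integral_add (f := fun ω ↦ ‖A ω‖ ^ 2 + 2 * ⟪b, A ω⟫) (hsq.add hcross_int)
      (integrable_const _), integral_add hsq hcross_int, integral_const_mul, hcross]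
  simp

lemma integral_norm_sum_sq_of_pairwise_indepFun [IsFiniteMeasure μ] [MeasurableSpace E]
    [BorelSpace E] {ι : Type*} (s : Finset ι) {D : ι → Ω → E} (hD : ∀ i, MemLp (D i) 2 μ)
    (hindep : Pairwise fun i j ↦ IndepFun (D i) (D j) μ) (hmean : ∀ i, ∫ ω, D i ω ∂μ = 0) :
    ∫ ω, ‖∑ i ∈ s, D i ω‖ ^ 2 ∂μ = ∑ i ∈ s, ∫ ω, ‖D i ω‖ ^ 2 ∂μ := by
  classical
  have hpair : ∀ i j,
      ∫ ω, ⟪D i ω, D j ω⟫ ∂μ = if i = j then ∫ ω, ⟪D i ω, D i ω⟫ ∂μ else 0 := by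
    intro i j
    split_ifs with hij
    · rw [hij]
    · have h := (hindep hij).integral_bilin ((hD i).integrable one_le_two)
        ((hD j).integrable one_le_two) (innerSL ℝ : E →L[ℝ] E →L[ℝ] ℝ)
      simp only [hmean, map_zero] at h
      exact h
  simp_rw [← real_inner_self_eq_norm_sq, sum_inner, inner_sum]
  rw [integral_finsetSum _ fun i _ ↦ integrable_finsetSum _ fun j _ ↦
    (hD i).integrable_real_inner (hD j)]
  refine Finset.sum_congr rfl fun i hi ↦ ?_
  rw [integral_finsetSum _ fun j _ ↦ (hD i).integrable_real_inner (hD j),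
    Finset.sum_congr rfl fun j _ ↦ hpair i j, Finset.sum_ite_eq, if_pos hi]

lemma integral_norm_smul_sum_sub_sq [IsProbabilityMeasure μ] [MeasurableSpace E] [BorelSpace E]
    {n : ℕ} (hn : 0 < n) {Y : Fin n → Ω → E} (hY : ∀ j, MemLp (Y j) 2 μ)
    (hindep : Pairwise fun i j ↦ IndepFun (Y i) (Y j) μ) {m : E}
    (hmean : ∀ j, ∫ ω, Y j ω ∂μ = m) {s : ℝ} (hsq : ∀ j, ∫ ω, ‖Y j ω‖ ^ 2 ∂μ = s) (c : ℝ) :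
    ∫ ω, ‖(c / n) • ∑ j, Y j ω - m‖ ^ 2 ∂μ
      = (c - 1) ^ 2 * ‖m‖ ^ 2 + c ^ 2 * (s - ‖m‖ ^ 2) / n := by
  set D : Fin n → Ω → E := fun j ω ↦ Y j ω - m
  have hD : ∀ j, MemLp (D j) 2 μ := fun j ↦ (hY j).sub (memLp_const m)
  have hDmean : ∀ j, ∫ ω, D j ω ∂μ = 0 := fun j ↦ by
    simp [D, integral_sub ((hY j).integrable one_le_two) (integrable_const m), hmean]
  have hDindep : Pairwise fun i j ↦ IndepFun (D i) (D j) μ := fun i j hij ↦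
    (hindep hij).comp (measurable_id.sub_const m) (measurable_id.sub_const m)
  have hDsq : ∀ j, ∫ ω, ‖D j ω‖ ^ 2 ∂μ = s - ‖m‖ ^ 2 := fun j ↦ by
    have := integral_norm_add_const_sq (hD j) (hDmean j) m
    simp only [D, sub_add_cancel, hsq] at this
    linarith
  have hn' : (n : ℝ) ≠ 0 := by positivity
  have hsplit : ∀ ω, (c / n) • ∑ j, Y j ω - m = (c / n) • ∑ j, D j ω + (c - 1) • m := by
    intro ω
    simp only [D, Finset.sum_sub_distrib, Finset.sum_const, Finset.card_univ, Fintype.card_fin,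
      smul_sub, smul_smul, ← Nat.cast_smul_eq_nsmul ℝ, div_mul_cancel₀ c hn', sub_smul, one_smul]
    abel
  have hA : MemLp (fun ω ↦ (c / n) • ∑ j, D j ω) 2 μ :=
    (memLp_finsetSum _ fun j _ ↦ hD j).const_smul _
  have hA₀ : ∫ ω, (c / n) • ∑ j, D j ω ∂μ = 0 := by
    rw [integral_smul, integral_finsetSum _ fun j _ ↦ (hD j).integrable one_le_two]
    simp [hDmean]
  simp_rw [hsplit]
  rw [integral_norm_add_const_sq hA hA₀]
  simp_rw [norm_smul, mul_pow, Real.norm_eq_abs, sq_abs]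
  rw [integral_const_mul, integral_norm_sum_sq_of_pairwise_indepFun _ hD hDindep hDmean]
  simp only [hDsq, Finset.sum_const, Finset.card_univ, Fintype.card_fin, nsmul_eq_mul]
  field_simp
  ring

end SecondMoments

lemma gaussKernel_eq_gaussianPDFReal {α : ℝ} (hα : 0 < α) :
    gaussKernel α = gaussianPDFReal 0 (α ^ 2 / 2).toNNReal := by
  ext z
  have hsqrt : √(2 * Real.pi * (α ^ 2 / 2)) = √Real.pi * α := by
    rw [show 2 * Real.pi * (α ^ 2 / 2) = Real.pi * α ^ 2 by ring,
      Real.sqrt_mul Real.pi_pos.le, Real.sqrt_sq hα.le]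
  rw [gaussKernel, gaussianPDFReal, Real.coe_toNNReal _ (by positivity), hsqrt, sub_zero]
  congr 3
  ring

lemma kernelCF_gaussKernel {α : ℝ} (hα : 0 < α) (s : ℝ) :
    kernelCF (gaussKernel α) s = Real.exp (-(s ^ 2 * α ^ 2) / 4) := by
  have hv : (α ^ 2 / 2).toNNReal ≠ 0 := by
    simp only [ne_eq, Real.toNNReal_eq_zero, not_le]
    positivity
  have h := charFun_gaussianReal (μ := 0) (v := (α ^ 2 / 2).toNNReal) s
  rw [charFun_apply_real, integral_gaussianReal_eq_integral_smul hv] at h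
  rw [kernelCF, gaussKernel_eq_gaussianPDFReal hα]
  refine (integral_congr_ae (ae_of_all _ fun z ↦ ?_)).trans (h.trans ?_)
  · rw [Complex.real_smul]
    ring_nf
  · rw [Real.coe_toNNReal _ (by positivity), Complex.ofReal_exp]
    push_cast
    ring_nf

lemma charFunRV_eq_charFun_map {Ω : Type*} [MeasureSpace Ω] {Y : Ω → ℝ} (hY : AEMeasurable Y)
    (t : ℝ) : charFunRV Y t = charFun (Measure.map Y ℙ) t := by
  rw [charFunRV, charFun_apply_real, integral_map hY (by fun_prop)]
  ring_nf

theorem gaussian_kcfe_mse_general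
    {Ω : Type*} [MeasureSpace Ω] [IsProbabilityMeasure (ℙ : Measure Ω)]
    (n : ℕ) (hn : 0 < n) (X : Fin n → Ω → ℝ)
    (hmeas : ∀ j, Measurable (X j))
    (hindep : iIndepFun X ℙ)
    (hident : ∀ j, Measure.map (X j) ℙ = Measure.map (X ⟨0, hn⟩) ℙ)
    (α : ℝ) (hα : 0 < α) (h : ℝ) (t : ℝ) :
    ∫ ω, ‖empCharFun X t ω * kernelCF (gaussKernel α) (t * h)
          - charFunRV (X ⟨0, hn⟩) t‖ ^ 2 ∂ℙ
      = (Real.exp (-(t ^ 2 * h ^ 2 * α ^ 2) / 4) - 1) ^ 2 * ‖charFunRV (X ⟨0, hn⟩) t‖ ^ 2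
        + (Real.exp (-(t ^ 2 * h ^ 2 * α ^ 2) / 4)) ^ 2 *
            (1 - ‖charFunRV (X ⟨0, hn⟩) t‖ ^ 2) / n := by
  set u := Real.exp (-(t ^ 2 * h ^ 2 * α ^ 2) / 4)
  set e : ℝ → ℂ := fun x ↦ Complex.exp (Complex.I * t * x)
  have he : Measurable e := by fun_prop
  have he_norm : ∀ x, ‖e x‖ = 1 := fun x ↦ by simp [e, Complex.norm_exp]
  have hestimator : ∀ ω, empCharFun X t ω * kernelCF (gaussKernel α) (t * h)
      = (u / n) • ∑ j, e (X j ω) := fun ω ↦ by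
    rw [empCharFun, kernelCF_gaussKernel hα, Complex.real_smul, mul_pow]
    simp only [u, e]
    push_cast
    ring
  simp_rw [hestimator]
  refine integral_norm_smul_sum_sub_sq hn
    (fun j ↦ MemLp.of_bound (he.comp (hmeas j)).aestronglyMeasurable 1
      (ae_of_all _ fun ω ↦ (he_norm _).le))
    (fun i j hij ↦ (hindep.indepFun hij).comp he he) (fun j ↦ ?_) (fun j ↦ by simp [he_norm]) u
  change charFunRV (X j) t = _
  rw [charFunRV_eq_charFun_map (hmeas j).aemeasurable, hident,
    ← charFunRV_eq_charFun_map (hmeas _).aemeasurable]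

/-- For the KCFE built with the Gaussian kernel with parameter `α > 0` and
bandwidth `h > 0`, for every `t : ℝ`, writing `u = exp(−t²h²α²/4)`, the mean squared error
satisfies `E[|φ̂_{nh}(t) − φ(t)|²] = (u − 1)²·|φ(t)|² + u²·(1 − |φ(t)|²)/n`. -/
theorem gaussian_kcfe_mse
    {Ω : Type*} [MeasureSpace Ω] [IsProbabilityMeasure (ℙ : Measure Ω)]
    (n : ℕ) (hn : 0 < n) (X : Fin n → Ω → ℝ)
    (hmeas : ∀ j, Measurable (X j))
    (hindep : iIndepFun X ℙ)
    (hident : ∀ j, Measure.map (X j) ℙ = Measure.map (X ⟨0, hn⟩) ℙ)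
    (α : ℝ) (hα : 0 < α) (h : ℝ) (hh : 0 < h) (t : ℝ) :
    ∫ ω, ‖empCharFun X t ω * kernelCF (gaussKernel α) (t * h)
          - charFunRV (X ⟨0, hn⟩) t‖ ^ 2 ∂ℙ
      = (Real.exp (-(t ^ 2 * h ^ 2 * α ^ 2) / 4) - 1) ^ 2 * ‖charFunRV (X ⟨0, hn⟩) t‖ ^ 2
        + (Real.exp (-(t ^ 2 * h ^ 2 * α ^ 2) / 4)) ^ 2 *
            (1 - ‖charFunRV (X ⟨0, hn⟩) t‖ ^ 2) / n :=
  gaussian_kcfe_mse_general n hn X hmeas hindep hident α hα h t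
end

section
/- (Characteristic function of the Fock-state tomogram.) For every m ∈ ℕ and every β ∈ ℝ, (1/(√π·2^m·m!))·∫_ℝ exp(−y²)·H_m(y)²·exp(iβy) dy = exp(−β²/4)·Σ_{k=0}^{m} [(−1)^k·m!/((k!)²·(m−k)!)]·(β²/2)^k, i.e., the characteristic function of the probability density y ↦ (√π·2^m·m!)^{−1}·e^{−y²}·H_m(y)² equals exp(−β²/4)·L_m(β²/2), where L_m is the m-th Laguerre polynomial. -/
/-!
Write `w(y) = e^{-y²+iβy}` and `∫ q w` for the pairing of a polynomial `q` with this weight.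
Since `e^{-y²} H_{n+1} = -(e^{-y²} H_n)'`, an integration by parts moves `H_{n+1}` off as the
operator `T = d/dy + iβ` on the other factor: `∫ H_{n+1} q w = ∫ H_n (T q) w`. Hence
`∫ H_m² w = ∫ (T^m H_m) w`. Expanding `T^m` binomially, with `H_m^{(j)} = 2^j m!/(m-j)! H_{m-j}`
and `∫ H_k w = ∫ (T^k 1) w = (iβ)^k √π e^{-β²/4}`, gives `√π 2^m m! e^{-β²/4} L_m(β²/2)`.
-/

open MeasureTheory Finset

noncomputable def physHermite (m : ℕ) (y : ℝ) : ℝ :=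
  (-1 : ℝ) ^ m * Real.exp (y ^ 2) * iteratedDeriv m (fun s : ℝ => Real.exp (-(s ^ 2))) y

open Polynomial
open scoped Nat

noncomputable def physHermitePoly (R : Type*) [CommRing R] : ℕ → R[X]
  | 0 => 1
  | n + 1 => 2 * X * physHermitePoly R n - derivative (physHermitePoly R n)

section PhysHermitePoly

variable {R : Type*} [CommRing R]

@[simp] theorem physHermitePoly_zero : physHermitePoly R 0 = 1 := rfl

theorem physHermitePoly_succ (n : ℕ) : physHermitePoly R (n + 1) =
    2 * X * physHermitePoly R n - derivative (physHermitePoly R n) := rfl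

theorem derivative_physHermitePoly_succ (n : ℕ) :
    derivative (physHermitePoly R (n + 1)) = C (2 * (n + 1) : R) * physHermitePoly R n := by
  induction n with
  | zero => simp [physHermitePoly_succ, ← C_ofNat]
  | succ n ih =>
    rw [physHermitePoly_succ (n + 1), derivative_sub, derivative_mul, derivative_mul, ih,
      derivative_C_mul, physHermitePoly_succ n]
    simp only [derivative_C, derivative_X, ← C_ofNat, map_mul, map_add, map_natCast, map_one]
    push_cast
    ring

theorem iterate_derivative_physHermitePoly (m j : ℕ) :
    derivative^[j] (physHermitePoly R m) =
      C (2 ^ j * m.descFactorial j : R) * physHermitePoly R (m - j) := by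
  induction j with
  | zero => simp
  | succ j ih =>
    rw [Function.iterate_succ_apply', ih, derivative_C_mul, Nat.descFactorial_succ]
    cases h : m - j with
    | zero => simp
    | succ k =>
      rw [derivative_physHermitePoly_succ, show m - (j + 1) = k by omega, ← mul_assoc, ← C_mul]
      congr 2
      push_cast
      ring

theorem map_physHermitePoly {S : Type*} [CommRing S] (f : R →+* S) (n : ℕ) :
    (physHermitePoly R n).map f = physHermitePoly S n := by
  induction n with
  | zero => simp
  | succ n ih => simp [physHermitePoly_succ, Polynomial.map_sub, ← derivative_map, ih]

end PhysHermitePoly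

theorem hasDerivAt_exp_neg_sq_mul_eval (p : ℝ[X]) (y : ℝ) :
    HasDerivAt (fun s => Real.exp (-(s ^ 2)) * p.eval s)
      (Real.exp (-(y ^ 2)) * (derivative p - 2 * X * p).eval y) y := by
  have hexp : HasDerivAt (fun s : ℝ => Real.exp (-(s ^ 2))) (Real.exp (-(y ^ 2)) * -(2 * y)) y := by
    simpa using ((hasDerivAt_pow 2 y).neg).exp
  refine (hexp.fun_mul (p.hasDerivAt y)).congr_deriv ?_
  simp only [eval_sub, eval_mul, eval_X, eval_ofNat]
  ring

theorem iteratedDeriv_exp_neg_sq (n : ℕ) :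
    iteratedDeriv n (fun s : ℝ => Real.exp (-(s ^ 2))) =
      fun y => (-1) ^ n * (Real.exp (-(y ^ 2)) * (physHermitePoly ℝ n).eval y) := by
  induction n with
  | zero => simp
  | succ n ih =>
    ext y
    rw [iteratedDeriv_succ, ih, ((hasDerivAt_exp_neg_sq_mul_eval _ y).const_mul _).deriv,
      physHermitePoly_succ]
    simp only [eval_sub]
    ring

theorem physHermite_eq_eval (m : ℕ) (y : ℝ) : physHermite m y = (physHermitePoly ℝ m).eval y := by
  have hexp : Real.exp (y ^ 2) * Real.exp (-(y ^ 2)) = 1 := by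
    rw [← Real.exp_add, add_neg_cancel, Real.exp_zero]
  have hsign : ((-1 : ℝ) ^ m) ^ 2 = 1 := by rw [← pow_mul, pow_mul', neg_one_sq, one_pow]
  rw [physHermite, iteratedDeriv_exp_neg_sq]
  linear_combination ((-1 : ℝ) ^ m) ^ 2 * (physHermitePoly ℝ m).eval y * hexp
    + (physHermitePoly ℝ m).eval y * hsign

theorem complex_ofReal_physHermite (m : ℕ) (y : ℝ) :
    (physHermite m y : ℂ) = (physHermitePoly ℂ m).eval (y : ℂ) := by
  rw [physHermite_eq_eval, ← map_physHermitePoly Complex.ofRealHom]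
  exact (eval_map_apply (f := Complex.ofRealHom) y).symm

section TwistedDerivative

variable {R : Type*} [CommRing R]

/-- `d/dy + c`, i.e. `d/dy` conjugated by `e^{cy}`. -/
noncomputable def twistedDerivative (c : R) : Module.End R R[X] := derivative + c • 1

theorem twistedDerivative_apply (c : R) (q : R[X]) :
    twistedDerivative c q = derivative q + C c * q := by
  simp [twistedDerivative, smul_eq_C_mul]

theorem twistedDerivative_pow_one (c : R) (n : ℕ) : (twistedDerivative c ^ n) 1 = C (c ^ n) := by
  induction n with
  | zero => simp
  | succ n ih =>
    rw [pow_succ', Module.End.mul_apply, ih, twistedDerivative_apply, derivative_C, zero_add,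
      pow_succ', C_mul]

theorem twistedDerivative_pow_apply (c : R) (n : ℕ) (q : R[X]) :
    (twistedDerivative c ^ n) q =
      ∑ k ∈ range (n + 1), ((n.choose k : R) * c ^ k) • derivative^[n - k] q := by
  have hcomm : Commute (c • 1 : Module.End R R[X]) derivative := (Commute.one_left _).smul_left c
  rw [twistedDerivative, add_comm, hcomm.add_pow, LinearMap.sum_apply]
  refine sum_congr rfl fun k _ => ?_
  rw [_root_.smul_pow, one_pow, Module.End.mul_apply, Module.End.mul_apply,
    Module.End.natCast_apply, map_nsmul, Module.End.pow_apply, LinearMap.smul_apply,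
    Module.End.one_apply, mul_smul, Nat.cast_smul_eq_nsmul, smul_comm]

end TwistedDerivative

section GaussFourier

open Complex

theorem integrable_pow_mul_exp_neg_sq (n : ℕ) :
    Integrable fun y : ℝ => y ^ n * Real.exp (-(y ^ 2)) := by
  simpa [Real.rpow_natCast] using
    integrable_rpow_mul_exp_neg_mul_sq one_pos (s := n) (by linarith [n.cast_nonneg (α := ℝ)])

variable (β : ℝ)

theorem norm_cexp_neg_sq_add_I_mul (y : ℝ) :
    ‖cexp (-(y : ℂ) ^ 2 + I * β * y)‖ = Real.exp (-(y ^ 2)) := by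
  rw [norm_exp]
  congr 1
  simp [← ofReal_pow]

theorem integrable_eval_mul_cexp_neg_sq_add_I_mul (q : ℂ[X]) :
    Integrable fun y : ℝ => q.eval (y : ℂ) * cexp (-(y : ℂ) ^ 2 + I * β * y) := by
  induction q using Polynomial.induction_on' with
  | add p q hp hq => simpa only [eval_add, add_mul] using hp.fun_add hq
  | monomial n a =>
    simp only [eval_monomial, mul_assoc a]
    refine ((integrable_pow_mul_exp_neg_sq n).norm.mono' ?_ ?_).const_mul a
    · fun_prop
    · refine Filter.Eventually.of_forall fun y => ?_
      rw [norm_mul, norm_mul, norm_cexp_neg_sq_add_I_mul, norm_pow, norm_pow, norm_real,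
        Real.norm_of_nonneg (Real.exp_pos _).le]

noncomputable def gaussFourier : ℂ[X] →ₗ[ℂ] ℂ where
  toFun q := ∫ y : ℝ, q.eval (y : ℂ) * cexp (-(y : ℂ) ^ 2 + I * β * y)
  map_add' p q := by
    simp only [eval_add, add_mul]
    exact integral_add (integrable_eval_mul_cexp_neg_sq_add_I_mul β p)
      (integrable_eval_mul_cexp_neg_sq_add_I_mul β q)
  map_smul' c q := by
    simp only [eval_smul, smul_eq_mul, mul_assoc, integral_const_mul, RingHom.id_apply]

theorem gaussFourier_apply (q : ℂ[X]) :
    gaussFourier β q = ∫ y : ℝ, q.eval (y : ℂ) * cexp (-(y : ℂ) ^ 2 + I * β * y) := rfl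

theorem gaussFourier_C_mul (a : ℂ) (q : ℂ[X]) :
    gaussFourier β (C a * q) = a * gaussFourier β q := by
  rw [← smul_eq_C_mul, map_smul, smul_eq_mul]

theorem gaussFourier_one : gaussFourier β 1 = Real.sqrt Real.pi * cexp (-(β : ℂ) ^ 2 / 4) := by
  have h := integral_cexp_quadratic (b := -1) (by simp) (I * β) 0
  have hπ : ((Real.pi : ℂ) / -(-1)) ^ (1 / 2 : ℂ) = Real.sqrt Real.pi := by
    rw [neg_neg, div_one, Real.sqrt_eq_rpow, ofReal_cpow Real.pi_pos.le]
    norm_num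
  have hexp : (0 : ℂ) - (I * β) ^ 2 / (4 * -1) = -(β : ℂ) ^ 2 / 4 := by
    rw [mul_pow, I_sq]
    ring
  rw [hπ, hexp] at h
  simpa [gaussFourier_apply] using h

theorem hasDerivAt_eval_mul_cexp_neg_sq_add_I_mul (p : ℂ[X]) (y : ℝ) :
    HasDerivAt (fun s : ℝ => p.eval (s : ℂ) * cexp (-(s : ℂ) ^ 2 + I * β * s))
      ((derivative p + (C (I * β) - 2 * X) * p).eval (y : ℂ) *
        cexp (-(y : ℂ) ^ 2 + I * β * y)) y := by
  have hquad : HasDerivAt (fun z : ℂ => -z ^ 2 + I * β * z) (-(2 * y) + I * β) (y : ℂ) := by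
    simpa using
      ((hasDerivAt_pow 2 (y : ℂ)).fun_neg).fun_add ((hasDerivAt_id (y : ℂ)).const_mul (I * β))
  refine ((p.hasDerivAt (y : ℂ)).mul hquad.cexp).comp_ofReal.congr_deriv ?_
  simp only [eval_add, eval_mul, eval_sub, eval_C, eval_X, eval_ofNat]
  ring

theorem gaussFourier_derivative (p : ℂ[X]) :
    gaussFourier β (derivative p) = gaussFourier β ((2 * X - C (I * β)) * p) := by
  have h : gaussFourier β (derivative p + (C (I * β) - 2 * X) * p) = 0 :=
    integral_eq_zero_of_hasDerivAt_of_integrable (hasDerivAt_eval_mul_cexp_neg_sq_add_I_mul β p)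
      (integrable_eval_mul_cexp_neg_sq_add_I_mul β _)
      (integrable_eval_mul_cexp_neg_sq_add_I_mul β p)
  rw [map_add, add_eq_zero_iff_eq_neg, ← map_neg] at h
  rw [h]
  congr 1
  ring

theorem gaussFourier_physHermitePoly_succ_mul (n : ℕ) (q : ℂ[X]) :
    gaussFourier β (physHermitePoly ℂ (n + 1) * q) =
      gaussFourier β (physHermitePoly ℂ n * twistedDerivative (I * β) q) := by
  have hsplit : physHermitePoly ℂ (n + 1) * q =
      physHermitePoly ℂ n * twistedDerivative (I * β) q +
        ((2 * X - C (I * β)) * (physHermitePoly ℂ n * q) -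
          derivative (physHermitePoly ℂ n * q)) := by
    rw [physHermitePoly_succ, twistedDerivative_apply, derivative_mul]
    ring
  rw [hsplit, map_add, map_sub, gaussFourier_derivative, sub_self, add_zero]

theorem gaussFourier_physHermitePoly_mul (n : ℕ) (q : ℂ[X]) :
    gaussFourier β (physHermitePoly ℂ n * q) =
      gaussFourier β ((twistedDerivative (I * β) ^ n) q) := by
  induction n generalizing q with
  | zero => simp
  | succ n ih => rw [gaussFourier_physHermitePoly_succ_mul, ih, pow_succ, Module.End.mul_apply]

theorem gaussFourier_physHermitePoly (k : ℕ) :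
    gaussFourier β (physHermitePoly ℂ k) = (I * β) ^ k * gaussFourier β 1 := by
  rw [← mul_one (physHermitePoly ℂ k), gaussFourier_physHermitePoly_mul,
    twistedDerivative_pow_one, ← mul_one (C _), gaussFourier_C_mul]

theorem gaussFourier_physHermitePoly_mul_self (m : ℕ) :
    gaussFourier β (physHermitePoly ℂ m * physHermitePoly ℂ m) =
      (∑ k ∈ range (m + 1),
        (m.choose k * 2 ^ (m - k) * m.descFactorial (m - k) : ℂ) * (-β ^ 2) ^ k) *
        gaussFourier β 1 := by
  rw [gaussFourier_physHermitePoly_mul, twistedDerivative_pow_apply, map_sum, sum_mul]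
  refine sum_congr rfl fun k hk => ?_
  have hkm : m - (m - k) = k := Nat.sub_sub_self (Nat.lt_succ_iff.mp (mem_range.mp hk))
  rw [iterate_derivative_physHermitePoly, hkm, map_smul, gaussFourier_C_mul,
    gaussFourier_physHermitePoly, smul_eq_mul]
  have hI : (I * β) ^ k * (I * β) ^ k = (-β ^ 2) ^ k := by
    rw [← mul_pow, mul_mul_mul_comm, I_mul_I, neg_one_mul, ← sq]
  linear_combination
    (m.choose k * 2 ^ (m - k) * m.descFactorial (m - k) * gaussFourier β 1 : ℂ) * hI

end GaussFourier

theorem Nat.choose_mul_descFactorial_sub_mul_factorial {m k : ℕ} (hk : k ≤ m) :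
    m.choose k * m.descFactorial (m - k) * (k ! ^ 2 * (m - k)!) = m ! ^ 2 := by
  have hdesc : k ! * m.descFactorial (m - k) = m ! := by
    simpa [Nat.sub_sub_self hk] using Nat.factorial_mul_descFactorial (Nat.sub_le m k)
  calc m.choose k * m.descFactorial (m - k) * (k ! ^ 2 * (m - k)!)
      = (m.choose k * k ! * (m - k)!) * (k ! * m.descFactorial (m - k)) := by ring
    _ = m ! ^ 2 := by rw [Nat.choose_mul_factorial_mul_factorial hk, hdesc, sq]

theorem sum_choose_mul_descFactorial_eq_laguerre (m : ℕ) (x : ℝ) :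
    1 / (2 ^ m * m !) * ∑ k ∈ range (m + 1),
        (m.choose k * 2 ^ (m - k) * m.descFactorial (m - k) : ℝ) * (-x) ^ k =
      ∑ k ∈ range (m + 1), (-1) ^ k * (m ! : ℝ) / ((k ! : ℝ) ^ 2 * ((m - k)! : ℝ)) * (x / 2) ^ k := by
  rw [mul_sum]
  refine sum_congr rfl fun k hk => ?_
  have hkm : k ≤ m := Nat.lt_succ_iff.mp (mem_range.mp hk)
  have hcoeff : (m.choose k * m.descFactorial (m - k) * (k ! ^ 2 * (m - k)!) : ℝ) = m ! ^ 2 := by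
    exact_mod_cast Nat.choose_mul_descFactorial_sub_mul_factorial hkm
  have hpow : (2 : ℝ) ^ (m - k) * 2 ^ k = 2 ^ m := by rw [← pow_add, Nat.sub_add_cancel hkm]
  rw [div_pow, neg_pow]
  field_simp
  linear_combination x ^ k * 2 ^ (m - k) * 2 ^ k * hcoeff + x ^ k * (m ! : ℝ) ^ 2 * hpow

/-- Characteristic function of the Fock-state tomogram: for every `m ∈ ℕ`
and `β ∈ ℝ`,
`(1/(√π·2^m·m!))·∫ e^{−y²}·H_m(y)²·e^{iβy} dy
  = e^{−β²/4}·Σ_{k=0}^{m} [(−1)^k·m!/((k!)²·(m−k)!)]·(β²/2)^k`,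
i.e. the characteristic function of the Fock-state tomogram equals
`exp(−β²/4)·L_m(β²/2)` with `L_m` the `m`-th Laguerre polynomial. -/
theorem fock_tomogram_charFun (m : ℕ) (β : ℝ) :
    ∫ y : ℝ,
        (((1 / (Real.sqrt Real.pi * 2 ^ m * (m.factorial : ℝ))) *
            Real.exp (-(y ^ 2)) * (physHermite m y) ^ 2 : ℝ) : ℂ) *
          Complex.exp (Complex.I * (β : ℂ) * (y : ℂ))
      = ((Real.exp (-(β ^ 2) / 4) *
            ∑ k ∈ Finset.range (m + 1),
              ((-1 : ℝ) ^ k * (m.factorial : ℝ) /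
                  (((k.factorial : ℝ)) ^ 2 * ((m - k).factorial : ℝ))) *
                (β ^ 2 / 2) ^ k : ℝ) : ℂ) := by
  set a : ℝ := 1 / (Real.sqrt Real.pi * 2 ^ m * (m.factorial : ℝ))
  have hintegrand (y : ℝ) :
      ((a * Real.exp (-(y ^ 2)) * physHermite m y ^ 2 : ℝ) : ℂ) *
          Complex.exp (Complex.I * β * y) =
        a * ((physHermitePoly ℂ m * physHermitePoly ℂ m).eval (y : ℂ) *
          Complex.exp (-(y : ℂ) ^ 2 + Complex.I * β * y)) := by
    rw [eval_mul, ← complex_ofReal_physHermite, Complex.exp_add]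
    push_cast
    ring
  simp_rw [hintegrand]
  rw [integral_const_mul, ← gaussFourier_apply, gaussFourier_physHermitePoly_mul_self,
    gaussFourier_one, ← sum_choose_mul_descFactorial_eq_laguerre]
  have hπ : Real.sqrt Real.pi ≠ 0 := (Real.sqrt_pos.mpr Real.pi_pos).ne'
  simp only [a]
  push_cast
  field_simp
end

section
/- (Tomogram of a coherent state.) Let a ∈ ℂ, μ, ν ∈ ℝ with ν ≠ 0, and set α = √(μ² + ν²). Then for every x ∈ ℝ, (1/(2π|ν|))·|∫_ℝ π^{−1/4}·exp(−y²/2 − |a|²/2 + √2·a·y − a²/2)·exp(iμy²/(2ν) − ixy/ν) dy|² = (√π·α)^{−1}·exp(−(x − √2·(μ·Re a + ν·Im a))²/α²), i.e., the symplectic tomogram of the coherent state |a⟩ is a Gaussian density in x with mean √2·(μ·Re a + ν·Im a) and variance α²/2. -/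
/-!
After multiplying out, the integrand is `π^(-1/4) · exp (b y² + c y + d)` with
`b = (-ν + iμ) / (2ν)`, whose real part is `-1/2`. The complex Gaussian integral
`∫ exp (b y² + c y + d) = √(π / -b) · exp (d - c² / (4b))` then gives
`|∫|² = π / |b| · exp (2 Re (d - c² / (4b)))`, where `|b| = α / (2|ν|)` and the real part of the
exponent is `-(x - √2 (μ Re a + ν Im a))² / (2α²)`.
-/

open MeasureTheory Complex

theorem norm_integral_cexp_quadratic_sq {b : ℂ} (hb : b.re < 0) (c d : ℂ) :
    ‖∫ y : ℝ, cexp (b * y ^ 2 + c * y + d)‖ ^ 2 =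
      Real.pi / ‖b‖ * Real.exp (2 * (d - c ^ 2 / (4 * b)).re) := by
  rw [integral_cexp_quadratic hb, norm_mul, mul_pow, norm_exp, ← Real.exp_nat_mul,
    ← ofReal_ofNat, ← ofReal_one, ← ofReal_div, norm_cpow_real, norm_div, norm_neg, norm_real,
    Real.norm_of_nonneg Real.pi_pos.le, ← Real.sqrt_eq_rpow,
    Real.sq_sqrt (div_nonneg Real.pi_pos.le (norm_nonneg b))]
  norm_num

theorem norm_rpow_neg_quarter_sq {r : ℝ} (hr : 0 < r) :
    ‖((r ^ (-(1 : ℝ) / 4) : ℝ) : ℂ)‖ ^ 2 = (Real.sqrt r)⁻¹ := by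
  rw [norm_real, Real.norm_of_nonneg (by positivity), ← Real.rpow_natCast,
    ← Real.rpow_mul hr.le, Real.sqrt_eq_rpow, ← Real.rpow_neg hr.le]
  norm_num

section TomogramGaussian

variable (a : ℂ) {μ ν : ℝ} (x : ℝ)

theorem coherent_state_mul_chirp_eq (hν : ν ≠ 0) (y : ℝ) :
    ((Real.pi ^ (-(1 : ℝ) / 4) : ℝ) : ℂ) *
        cexp (-(y : ℂ) ^ 2 / 2 - ((‖a‖ : ℝ) : ℂ) ^ 2 / 2 +
          ((Real.sqrt 2 : ℝ) : ℂ) * a * (y : ℂ) - a ^ 2 / 2) *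
        cexp (I * (μ : ℂ) * (y : ℂ) ^ 2 / (2 * (ν : ℂ)) - I * (x : ℂ) * (y : ℂ) / (ν : ℂ)) =
      ((Real.pi ^ (-(1 : ℝ) / 4) : ℝ) : ℂ) *
        cexp ((-ν + μ * I) / (2 * ν) * y ^ 2 + (Real.sqrt 2 * a - I * x / ν) * y +
          (-(‖a‖ : ℂ) ^ 2 / 2 - a ^ 2 / 2)) := by
  have hν' : (ν : ℂ) ≠ 0 := ofReal_ne_zero.mpr hν
  rw [mul_assoc, ← Complex.exp_add]
  congr 2
  field_simp
  ring

theorem re_tomogram_coeff_neg (hν : ν ≠ 0) : ((-ν + μ * I) / (2 * ν) : ℂ).re < 0 := by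
  rw [← ofReal_ofNat, ← ofReal_mul, div_ofReal_re]
  simp only [add_re, neg_re, ofReal_re, re_ofReal_mul, I_re, mul_zero, add_zero]
  field_simp
  norm_num

theorem norm_tomogram_coeff :
    ‖((-ν + μ * I) / (2 * ν) : ℂ)‖ = Real.sqrt (μ ^ 2 + ν ^ 2) / (2 * |ν|) := by
  rw [norm_div, ← ofReal_neg, norm_add_mul_I, ← ofReal_ofNat, ← ofReal_mul, norm_real,
    Real.norm_eq_abs, abs_mul, abs_two]
  ring_nf

theorem re_tomogram_exponent (hν : ν ≠ 0) :
    2 * (-(‖a‖ : ℂ) ^ 2 / 2 - a ^ 2 / 2 -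
        ((Real.sqrt 2 : ℂ) * a - I * x / ν) ^ 2 / (4 * ((-ν + μ * I) / (2 * ν)))).re =
      -(x - Real.sqrt 2 * (μ * a.re + ν * a.im)) ^ 2 / (μ ^ 2 + ν ^ 2) := by
  have hs : Real.sqrt 2 ^ 2 = 2 := Real.sq_sqrt (by norm_num)
  have ha : ‖a‖ ^ 2 = a.re ^ 2 + a.im ^ 2 := by rw [Complex.sq_norm, normSq_apply]; ring
  have hμν : μ ^ 2 + ν ^ 2 ≠ 0 := by positivity
  rw [show 4 * ((-ν + μ * I) / (2 * ν)) = 2 * (-ν + μ * I) / ν by field_simp; ring,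
    div_div_eq_mul_div]
  simp only [sq, ← ofReal_mul, sub_re, div_ofNat_re, neg_re, ofReal_re, mul_re, div_re,
    ofReal_im, zero_mul, sub_zero, I_re, I_im, mul_zero, sub_self, normSq_apply, add_zero,
    zero_div, mul_im, one_mul, zero_add, sub_im, div_ofReal_im, re_ofNat, add_re, mul_one,
    mul_neg, im_ofNat, add_im, neg_im, neg_zero, neg_mul, neg_neg]
  field_simp
  ring_nf
  rw [hs, ha]
  ring

end TomogramGaussian

/-- Tomogram of a coherent state: for `a ∈ ℂ`, `μ, ν ∈ ℝ` with `ν ≠ 0` and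
`α = √(μ² + ν²)`, the symplectic tomogram of the coherent state `|a⟩`,
`W(x|μ,ν) = (1/(2π|ν|))·|∫ ψ_a(y)·exp(iμy²/(2ν) − ixy/ν) dy|²`, equals the Gaussian
density `(√π·α)⁻¹·exp(−(x − √2·(μ·Re a + ν·Im a))²/α²)`. -/
theorem coherent_state_tomogram
    (a : ℂ) (μ ν : ℝ) (hν : ν ≠ 0) (α : ℝ) (hα : α = Real.sqrt (μ ^ 2 + ν ^ 2)) (x : ℝ) :
    (1 / (2 * Real.pi * |ν|)) *
        ‖∫ y : ℝ,
            ((Real.pi ^ (-(1 : ℝ) / 4) : ℝ) : ℂ) *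
              Complex.exp (-(y : ℂ) ^ 2 / 2 - ((‖a‖ : ℝ) : ℂ) ^ 2 / 2 +
                ((Real.sqrt 2 : ℝ) : ℂ) * a * (y : ℂ) - a ^ 2 / 2) *
              Complex.exp (Complex.I * (μ : ℂ) * (y : ℂ) ^ 2 / (2 * (ν : ℂ)) -
                Complex.I * (x : ℂ) * (y : ℂ) / (ν : ℂ))‖ ^ 2
      = (Real.sqrt Real.pi * α)⁻¹ *
          Real.exp (-(x - Real.sqrt 2 * (μ * a.re + ν * a.im)) ^ 2 / α ^ 2) := by
  have hα_sq : α ^ 2 = μ ^ 2 + ν ^ 2 := hα ▸ Real.sq_sqrt (by positivity)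
  simp_rw [coherent_state_mul_chirp_eq a x hν, integral_const_mul, norm_mul, mul_pow,
    norm_rpow_neg_quarter_sq Real.pi_pos,
    norm_integral_cexp_quadratic_sq (re_tomogram_coeff_neg hν), norm_tomogram_coeff,
    re_tomogram_exponent a x hν, ← hα, ← hα_sq]
  field_simp
end
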